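/- arXiv:1212.3989 — 2 statements merged into one kernel-verified Lean document; each statement's English description precedes it below -/
import Mathlib

section
/- For nonnegative integers n and k, B_n^{(-k)} = ∑_{j=0}^{min(n,k)} (j!)^2 S(n+1, j+1) S(k+1, j+1), where S denotes Stirling numbers of the second kind. -/
open Real Filter Topology Finset

/-- Polylogarithm `Li_k(z) = ∑_{m≥1} z^m / m^k`. -/
noncomputable def Li (k : ℤ) (z : ℝ) : ℝ := ∑' m : ℕ, z ^ (m + 1) / ((m + 1 : ℝ)) ^ k

/-- Stirling numbers of the second kind via the explicit formula. -/
noncomputable def S (n m : ℕ) : ℝ :=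
  ((-1) ^ m / (m.factorial : ℝ)) *
    ∑ l ∈ Finset.range (m + 1), (-1) ^ l * (m.choose l : ℝ) * (l : ℝ) ^ n

/-!
Write `Δʲ[rᵏ](1)` for the `j`-th forward difference of `r ↦ r ^ k` at `1`. Newton's
forward-difference formula gives `(m + 1) ^ k = ∑_{j ≤ k} C(m, j) Δʲ[rᵏ](1)`, and
`∑_m C(m, j) z ^ m = z ^ j / (1 - z) ^ (j + 1)`. With `z = 1 - e⁻ˣ` the generating function is
therefore the finite sum `∑_{j ≤ k} Δʲ[rᵏ](1) (eˣ - 1) ^ j eˣ`. Applying `Δʲ` to the additive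
character `r ↦ e^{rx}` shows that `(eˣ - 1) ^ j eˣ` is the exponential generating function of
`n ↦ Δʲ[rⁿ](1) = j! S(n + 1, j + 1)`, and comparing coefficients gives the formula. The sum stops
at `min n k` because `Δʲ` kills polynomials of degree `< j`.
-/

open fwdDiff

theorem HasSum.fwdDiff_iter {M G : Type*} [AddCommMonoid M] [AddCommGroup G] [TopologicalSpace G]
    [IsTopologicalAddGroup G] (h : M) {f : ℕ → M → G} {g : M → G}
    (hf : ∀ y, HasSum (fun n ↦ f n y) (g y)) (j : ℕ) (y : M) :
    HasSum (fun n ↦ Δ_[h] ^[j] (f n) y) (Δ_[h] ^[j] g y) := by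
  simp_rw [fwdDiff_iter_eq_sum_shift]
  exact hasSum_sum fun i _ ↦ (hf _).const_smul _

theorem succ_pow_eq_sum_choose_mul_fwdDiff_iter {R : Type*} [CommRing R] (k m : ℕ) :
    ((m : R) + 1) ^ k =
      ∑ j ∈ range (k + 1), (m.choose j : R) * Δ_[1] ^[j] (fun r : R ↦ r ^ k) 1 := by
  have newton := shift_eq_sum_fwdDiff_iter (1 : R) (fun r ↦ r ^ k) m 1
  simp only [nsmul_eq_mul, mul_one] at newton
  rw [add_comm, newton]
  have hm : range (m + 1) ⊆ range (m + k + 1) := range_subset_range.mpr (by omega)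
  have hk : range (k + 1) ⊆ range (m + k + 1) := range_subset_range.mpr (by omega)
  rw [sum_subset hm, sum_subset hk]
  · intro j _ hj
    rw [fwdDiff_iter_pow_eq_zero_of_lt (by simpa using hj), Pi.zero_apply, mul_zero]
  · intro j _ hj
    rw [Nat.choose_eq_zero_of_lt (by simpa using hj), Nat.cast_zero, zero_mul]

theorem hasSum_choose_mul_pow {𝕜 : Type*} [NormedField 𝕜] [CompleteSpace 𝕜] (j : ℕ) {z : 𝕜}
    (hz : ‖z‖ < 1) : HasSum (fun m ↦ (m.choose j : 𝕜) * z ^ m) (z ^ j / (1 - z) ^ (j + 1)) := by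
  rw [← hasSum_nat_add_iff' j, sum_eq_zero fun i hi ↦ by
    rw [Nat.choose_eq_zero_of_lt (mem_range.mp hi), Nat.cast_zero, zero_mul], sub_zero]
  rw [← mul_one_div]
  refine ((hasSum_choose_mul_geometric_of_norm_lt_one j hz).mul_left (z ^ j)).congr_fun fun n ↦ ?_
  ring

theorem hasSum_succ_pow_mul_pow {𝕜 : Type*} [NormedField 𝕜] [CompleteSpace 𝕜] (k : ℕ) {z : 𝕜}
    (hz : ‖z‖ < 1) :
    HasSum (fun m : ℕ ↦ ((m : 𝕜) + 1) ^ k * z ^ m)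
      (∑ j ∈ range (k + 1), Δ_[1] ^[j] (fun r : 𝕜 ↦ r ^ k) 1 * (z ^ j / (1 - z) ^ (j + 1))) := by
  simp_rw [succ_pow_eq_sum_choose_mul_fwdDiff_iter, sum_mul]
  refine hasSum_sum fun j _ ↦ ((hasSum_choose_mul_pow j hz).mul_left _).congr_fun fun m ↦ ?_
  ring

theorem eq_zero_of_eventually_hasSum_mul_pow_zero {𝕜 : Type*} [NontriviallyNormedField 𝕜]
    {a : ℕ → 𝕜} (h : ∀ᶠ x in 𝓝[≠] (0 : 𝕜), HasSum (fun n ↦ a n * x ^ n) 0) : a = 0 := by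
  classical
  -- `f` is the sum of the series near `0`, so it is continuous there, which forces `a 0 = 0`.
  let f : 𝕜 → 𝕜 := fun x ↦ if x = 0 then a 0 else 0
  have hf : HasFPowerSeriesAt f (FormalMultilinearSeries.ofScalars 𝕜 a) 0 := by
    rw [hasFPowerSeriesAt_iff]
    filter_upwards [eventually_nhdsWithin_iff.mp h] with z hz
    rcases eq_or_ne z 0 with rfl | hz₀
    · simpa [f] using hasSum_single (f := fun n ↦ (0 : 𝕜) ^ n • a n) 0 fun n hn ↦ by simp [hn]
    · simpa [f, hz₀, mul_comm] using hz hz₀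
  have ha₀ : a 0 = 0 := by
    have hlim : Tendsto f (𝓝[≠] 0) (𝓝 (f 0)) :=
      hf.continuousAt.tendsto.mono_left nhdsWithin_le_nhds
    have hvanish : Tendsto f (𝓝[≠] 0) (𝓝 0) :=
      tendsto_const_nhds.congr' (eventually_nhdsWithin_of_forall fun x hx ↦ by simp_all [f])
    simpa [f] using tendsto_nhds_unique hlim hvanish
  have hp := hf.eq_zero_of_eventually (Eventually.of_forall fun x ↦ by simp [f, ha₀])
  ext n
  rw [← FormalMultilinearSeries.coeff_ofScalars (p := a), hp, Pi.zero_apply,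
    FormalMultilinearSeries.coeff_eq_zero]
  rfl

theorem eq_of_eventually_hasSum_mul_pow_div_factorial {𝕜 : Type*} [NontriviallyNormedField 𝕜]
    [CharZero 𝕜] {a b : ℕ → 𝕜} {f : 𝕜 → 𝕜}
    (ha : ∀ᶠ x in 𝓝[≠] (0 : 𝕜), HasSum (fun n ↦ a n * x ^ n / n.factorial) (f x))
    (hb : ∀ᶠ x in 𝓝[≠] (0 : 𝕜), HasSum (fun n ↦ b n * x ^ n / n.factorial) (f x)) : a = b := by
  have h := eq_zero_of_eventually_hasSum_mul_pow_zero (a := fun n ↦ (a n - b n) / n.factorial) <| by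
    filter_upwards [ha, hb] with x hax hbx
    refine (sub_self (f x) ▸ hax.sub hbx).congr_fun fun n ↦ ?_
    ring
  funext n
  simpa [sub_eq_zero, Nat.factorial_ne_zero] using congrFun h n

theorem factorial_mul_S_succ_succ (n j : ℕ) :
    (j.factorial : ℝ) * S (n + 1) (j + 1) = Δ_[1] ^[j] (fun r : ℝ ↦ r ^ n) 1 := by
  rw [fwdDiff_iter_eq_sum_shift, S, sum_range_succ']
  simp only [Nat.cast_zero, zero_pow (Nat.succ_ne_zero n), mul_zero, add_zero]
  rw [← mul_assoc, mul_sum]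
  refine sum_congr rfl fun i hi ↦ ?_
  have hsign : (-1 : ℝ) ^ (j + 1) * (-1) ^ (i + 1) = (-1) ^ (j - i) := by
    rw [← pow_add, show j + 1 + (i + 1) = (j - i) + 2 * (i + 1) by grind, pow_add, pow_mul]
    norm_num
  have hchoose : ((j + 1).choose (i + 1) : ℝ) * ((i : ℝ) + 1) = (j + 1) * (j.choose i : ℝ) := by
    exact_mod_cast (Nat.add_one_mul_choose_eq j i).symm
  rw [Nat.factorial_succ, zsmul_eq_mul, nsmul_eq_mul, mul_one, add_comm 1 (i : ℝ)]
  push_cast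
  field_simp
  rw [← hsign, pow_succ]
  linear_combination ((-1 : ℝ) ^ (j + 1) * (-1) ^ (i + 1) * ((i : ℝ) + 1) ^ n) * hchoose

theorem sum_fwdDiff_iter_pow_mul_fwdDiff_iter_pow (n k : ℕ) :
    ∑ j ∈ range (k + 1), Δ_[1] ^[j] (fun r : ℝ ↦ r ^ k) 1 * Δ_[1] ^[j] (fun r : ℝ ↦ r ^ n) 1 =
      ∑ j ∈ range (min n k + 1), (j.factorial : ℝ) ^ 2 * S (n + 1) (j + 1) * S (k + 1) (j + 1) := by
  rw [← sum_subset (range_subset_range.mpr (by omega : min n k + 1 ≤ k + 1))]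
  · refine sum_congr rfl fun j _ ↦ ?_
    rw [← factorial_mul_S_succ_succ, ← factorial_mul_S_succ_succ]
    ring
  · intro j hjk hjn
    rw [mem_range] at hjk hjn
    rw [fwdDiff_iter_pow_eq_zero_of_lt (j := n) (by omega), Pi.zero_apply, mul_zero]

theorem hasSum_fwdDiff_iter_pow_mul_pow_div_factorial (j : ℕ) (x : ℝ) :
    HasSum (fun n ↦ Δ_[1] ^[j] (fun r : ℝ ↦ r ^ n) 1 * x ^ n / n.factorial)
      ((exp x - 1) ^ j * exp x) := by
  let φ : AddChar ℝ ℝ := ⟨fun r ↦ exp (r * x), by simp, fun a b ↦ by rw [add_mul, exp_add]⟩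
  have hφ : ∀ y, HasSum (fun n ↦ ((x ^ n / n.factorial) • fun r : ℝ ↦ r ^ n) y) (φ y) := by
    intro y
    have hexp := NormedSpace.expSeries_div_hasSum_exp (y * x)
    rw [← exp_eq_exp_ℝ] at hexp
    refine hexp.congr_fun fun n ↦ ?_
    simp only [Pi.smul_apply, smul_eq_mul, mul_pow]
    ring
  have hΔ := HasSum.fwdDiff_iter (1 : ℝ) hφ j 1
  simp only [fwdDiff_iter_const_smul, fwdDiff_addChar_eq] at hΔ
  simpa [φ, mul_div_right_comm, mul_comm] using hΔ

theorem Li_neg_div_self (k : ℕ) {z : ℝ} (hz₀ : z ≠ 0) (hz : |z| < 1) :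
    Li (-k) z / z =
      ∑ j ∈ range (k + 1), Δ_[1] ^[j] (fun r : ℝ ↦ r ^ k) 1 * (z ^ j / (1 - z) ^ (j + 1)) := by
  have hLi := ((hasSum_succ_pow_mul_pow k hz).mul_left z).tsum_eq
  rw [Li, div_eq_iff hz₀, mul_comm _ z, ← hLi]
  refine tsum_congr fun m ↦ ?_
  rw [zpow_neg, zpow_natCast, div_inv_eq_mul, pow_succ]
  ring

theorem one_sub_exp_neg_pow_div (x : ℝ) (j : ℕ) :
    (1 - exp (-x)) ^ j / (1 - (1 - exp (-x))) ^ (j + 1) = (exp x - 1) ^ j * exp x := by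
  have hfactor : 1 - exp (-x) = (exp x - 1) * exp (-x) := by
    rw [sub_mul, ← exp_add, add_neg_cancel, exp_zero, one_mul]
  rw [sub_sub_cancel, hfactor, mul_pow, pow_succ, ← div_div,
    mul_div_cancel_right₀ _ (pow_ne_zero _ (exp_pos _).ne'), div_eq_mul_inv, ← exp_neg, neg_neg]

theorem eventually_abs_one_sub_exp_neg_lt_one : ∀ᶠ x in 𝓝 (0 : ℝ), |1 - exp (-x)| < 1 := by
  have hcont : Tendsto (fun x ↦ |1 - exp (-x)|) (𝓝 0) (𝓝 0) := by
    simpa using ((continuous_const.sub (continuous_exp.comp continuous_neg)).abs.tendsto 0 :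
      Tendsto (fun x : ℝ ↦ |1 - exp (-x)|) _ _)
  exact hcont.eventually_lt_const one_pos

theorem eventually_hasSum_Li_neg_one_sub_exp_neg (k : ℕ) :
    ∀ᶠ x in 𝓝[≠] (0 : ℝ), HasSum
      (fun n ↦ (∑ j ∈ range (k + 1),
        Δ_[1] ^[j] (fun r : ℝ ↦ r ^ k) 1 * Δ_[1] ^[j] (fun r : ℝ ↦ r ^ n) 1) * x ^ n / n.factorial)
      (Li (-k) (1 - exp (-x)) / (1 - exp (-x))) := by
  filter_upwards [eventually_nhdsWithin_of_eventually_nhds eventually_abs_one_sub_exp_neg_lt_one,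
    self_mem_nhdsWithin] with x hx hx₀
  have hz₀ : 1 - exp (-x) ≠ 0 := by
    rw [sub_ne_zero, ne_comm, Ne, exp_eq_one_iff, neg_eq_zero]
    exact hx₀
  simp_rw [Li_neg_div_self k hz₀ hx, one_sub_exp_neg_pow_div, sum_mul, sum_div]
  refine hasSum_sum fun j _ ↦
    ((hasSum_fwdDiff_iter_pow_mul_pow_div_factorial j x).mul_left _).congr_fun fun n ↦ ?_
  ring

/-- Closed formula for poly-Bernoulli numbers of negative index:
`B_n^{(-k)} = ∑_{j=0}^{min(n,k)} (j!)² S(n+1,j+1) S(k+1,j+1)`. -/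
theorem polyBernoulli_neg_index_formula (n k : ℕ) (B : ℕ → ℝ)
    (hB : ∀ᶠ x in 𝓝[≠] (0 : ℝ),
      HasSum (fun m : ℕ => B m * x ^ m / (m.factorial : ℝ))
        (Li (-(k : ℤ)) (1 - Real.exp (-x)) / (1 - Real.exp (-x)))) :
    B n = ∑ j ∈ Finset.range (min n k + 1),
      ((j.factorial : ℝ)) ^ 2 * S (n + 1) (j + 1) * S (k + 1) (j + 1) := by
  have hcoeff :=
    eq_of_eventually_hasSum_mul_pow_div_factorial hB (eventually_hasSum_Li_neg_one_sub_exp_neg k)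
  exact (congrFun hcoeff n).trans (sum_fwdDiff_iter_pow_mul_fwdDiff_iter_pow n k)
end

section
/- For all real x and nonnegative integer n, the classical Bernoulli polynomial satisfies B_n(x) = ∑_{k=0, k≠1}^{n} C(n,k) B_k E_{n-k}(x), where B_k are Bernoulli numbers and E_j(x) are Euler polynomials. -/
open Real Filter Topology Finset

/-! Since `B₁ = -1/2`, removing the `k = 1` term from the Bernoulli generating function leaves
`t/(eᵗ - 1) + t/2 = (t/2)(eᵗ + 1)/(eᵗ - 1)`, and multiplying this by the Euler generating function
`2e^{xt}/(eᵗ + 1)` gives `t e^{xt}/(eᵗ - 1)`, the generating function of the `B_n(x)`. A product of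
exponential generating functions is the generating function of the binomial convolution, so the
identity follows by comparing coefficients. The value of `B₁` comes from the same comparison applied
to `(-t)/(e⁻ᵗ - 1) = t/(eᵗ - 1) + t`. -/

theorem eq_zero_of_hasSum_pow_nhdsNE {𝕜 : Type*} [NontriviallyNormedField 𝕜] [CompleteSpace 𝕜]
    {c : ℕ → 𝕜} (h : ∀ᶠ t in 𝓝[≠] (0 : 𝕜), HasSum (fun n => c n * t ^ n) 0) : c = 0 := by
  obtain ⟨t₀, ht₀, ht₀_ne⟩ := (h.and self_mem_nhdsWithin).exists
  set p := FormalMultilinearSeries.ofScalars 𝕜 c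
  have hradius : (‖t₀‖₊ : ENNReal) ≤ p.radius := by
    refine p.le_radius_of_tendsto (l := 0) ?_
    simpa [p, FormalMultilinearSeries.ofScalars_norm, ← norm_pow, ← norm_mul]
      using ht₀.summable.tendsto_atTop_zero.norm
  have hp : HasFPowerSeriesAt p.sum p 0 :=
    (p.hasFPowerSeriesOnBall (lt_of_lt_of_le (by simpa using ht₀_ne) hradius)).hasFPowerSeriesAt
  have hsum : ∀ᶠ t in 𝓝[≠] (0 : 𝕜), p.sum t = 0 := by
    filter_upwards [h] with t ht
    rw [← ht.tsum_eq]
    exact FormalMultilinearSeries.ofScalars_sum_eq c t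
  have hp_zero : p = 0 :=
    hp.locally_zero_iff.mp (hp.analyticAt.frequently_zero_iff_eventually_zero.mp hsum.frequently)
  exact (FormalMultilinearSeries.ofScalars_series_eq_zero 𝕜).mp hp_zero

theorem eq_of_hasSum_egf_nhdsNE {𝕜 : Type*} [NontriviallyNormedField 𝕜] [CharZero 𝕜]
    [CompleteSpace 𝕜] {a b : ℕ → 𝕜} {f : 𝕜 → 𝕜}
    (ha : ∀ᶠ t in 𝓝[≠] (0 : 𝕜), HasSum (fun n => a n * t ^ n / n.factorial) (f t))
    (hb : ∀ᶠ t in 𝓝[≠] (0 : 𝕜), HasSum (fun n => b n * t ^ n / n.factorial) (f t)) :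
    a = b := by
  have h := eq_zero_of_hasSum_pow_nhdsNE (c := fun n => (a n - b n) / n.factorial) <| by
    filter_upwards [ha, hb] with t ha hb
    simpa [sub_mul, sub_div, div_mul_eq_mul_div] using ha.sub hb
  funext n
  simpa [sub_eq_zero, Nat.factorial_ne_zero] using congr_fun h n

theorem HasSum.mul_egf {𝕜 : Type*} [RCLike 𝕜] {a b : ℕ → 𝕜} {t A B : 𝕜}
    (ha : HasSum (fun n => a n * t ^ n / n.factorial) A)
    (hb : HasSum (fun n => b n * t ^ n / n.factorial) B) :
    HasSum (fun n => (∑ k ∈ range (n + 1), n.choose k * a k * b (n - k)) * t ^ n / n.factorial)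
      (A * B) := by
  have h := hasSum_sum_range_mul_of_summable_norm ha.summable.norm hb.summable.norm
  rw [ha.tsum_eq, hb.tsum_eq] at h
  refine h.congr_fun fun n => ?_
  rw [sum_mul, sum_div]
  refine sum_congr rfl fun k hk => ?_
  obtain ⟨j, rfl⟩ := Nat.exists_eq_add_of_le (Nat.lt_succ_iff.mp (mem_range.mp hk))
  rw [Nat.cast_choose 𝕜 (Nat.le_add_right k j), Nat.add_sub_cancel_left, pow_add]
  have hfact : ((k + j).factorial : 𝕜) ≠ 0 := Nat.cast_ne_zero.mpr (Nat.factorial_ne_zero _)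
  field_simp

theorem bernoulli_one_eq_of_hasSum {B : ℕ → ℝ}
    (hB : ∀ᶠ t in 𝓝[≠] (0 : ℝ),
      HasSum (fun k => B k * t ^ k / k.factorial) (t / (exp t - 1))) :
    B 1 = -1 / 2 := by
  have hneg : Tendsto Neg.neg (𝓝[≠] (0 : ℝ)) (𝓝[≠] 0) := by
    rw [Tendsto, Filter.map_neg, Filter.neg_nhdsNE, neg_zero]
  have hflip : ∀ᶠ t in 𝓝[≠] (0 : ℝ),
      HasSum (fun k => (-1) ^ k * B k * t ^ k / k.factorial) (t / (exp t - 1) + t) := by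
    filter_upwards [hneg.eventually hB, self_mem_nhdsWithin] with t h ht
    have hexp : exp t - 1 ≠ 0 := sub_ne_zero.mpr fun h => ht (exp_eq_one_iff t |>.mp h)
    have hexp' : 1 - exp t ≠ 0 := by rwa [← neg_sub, neg_ne_zero]
    have hodd : -t / (exp (-t) - 1) = t / (exp t - 1) + t := by
      rw [exp_neg]
      field_simp
      ring
    rw [← hodd]
    exact h.congr_fun fun k => by rw [neg_pow]; ring
  have hshift : ∀ᶠ t in 𝓝[≠] (0 : ℝ),
      HasSum (fun k => (B k + if k = 1 then 1 else 0) * t ^ k / k.factorial)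
        (t / (exp t - 1) + t) := by
    filter_upwards [hB] with t h
    refine (h.add (hasSum_ite_eq 1 t)).congr_fun fun k => ?_
    split_ifs with hk
    · subst hk
      simp only [Nat.factorial_one]
      ring
    · simp
  have h₁ := congr_fun (eq_of_hasSum_egf_nhdsNE hflip hshift) 1
  norm_num at h₁
  linarith

/-- Cheon's relation between Bernoulli polynomials, Bernoulli numbers and
Euler polynomials: `B_n(x) = ∑_{k=0, k≠1}^n C(n,k) B_k E_{n-k}(x)`. -/
theorem bernoulli_euler_relation (B : ℕ → ℝ) (Bp : ℕ → ℝ → ℝ) (E : ℕ → ℝ → ℝ)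
    (hB : ∀ᶠ t in 𝓝[≠] (0 : ℝ),
      HasSum (fun k : ℕ => B k * t ^ k / (k.factorial : ℝ)) (t / (Real.exp t - 1)))
    (hBp : ∀ x : ℝ, ∀ᶠ t in 𝓝[≠] (0 : ℝ),
      HasSum (fun n : ℕ => Bp n x * t ^ n / (n.factorial : ℝ))
        (t * Real.exp (x * t) / (Real.exp t - 1)))
    (hE : ∀ x : ℝ, ∀ᶠ t in 𝓝 (0 : ℝ),
      HasSum (fun n : ℕ => E n x * t ^ n / (n.factorial : ℝ))
        (2 * Real.exp (x * t) / (Real.exp t + 1))) :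
    ∀ (x : ℝ) (n : ℕ),
      Bp n x = ∑ k ∈ (Finset.range (n + 1)).erase 1,
        (n.choose k : ℝ) * B k * E (n - k) x := by
  intro x n
  have hB₁ := bernoulli_one_eq_of_hasSum hB
  have hgen : ∀ᶠ t in 𝓝[≠] (0 : ℝ),
      HasSum (fun n => (∑ k ∈ range (n + 1),
          n.choose k * (if k = 1 then 0 else B k) * E (n - k) x) * t ^ n / n.factorial)
        (t * exp (x * t) / (exp t - 1)) := by
    filter_upwards [hB, (hE x).filter_mono nhdsWithin_le_nhds, self_mem_nhdsWithin]
      with t hBt hEt ht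
    have hexp : exp t - 1 ≠ 0 := sub_ne_zero.mpr fun h => ht (exp_eq_one_iff t |>.mp h)
    have hBt' : HasSum (fun k => (if k = 1 then 0 else B k) * t ^ k / k.factorial)
        (t / (exp t - 1) + t / 2) := by
      rw [show t / (exp t - 1) + t / 2 = t / (exp t - 1) - B 1 * t by rw [hB₁]; ring]
      refine (hBt.sub (hasSum_ite_eq 1 (B 1 * t))).congr_fun fun k => ?_
      split_ifs with hk
      · subst hk
        simp
      · simp
    have hexp' : exp t + 1 ≠ 0 := by positivity
    have hval : t * exp (x * t) / (exp t - 1)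
        = (t / (exp t - 1) + t / 2) * (2 * exp (x * t) / (exp t + 1)) := by
      field_simp
      ring
    rw [hval]
    -- elaborated without the expected type: unifying the casts through `RCLike ℝ` is slow
    exact (hBt'.mul_egf hEt :)
  rw [congr_fun (eq_of_hasSum_egf_nhdsNE (hBp x) hgen) n,
    ← sum_erase (range (n + 1)) (a := 1) (by simp)]
  exact sum_congr rfl fun k hk => by rw [if_neg (ne_of_mem_erase hk)]
end
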